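/- arXiv:0708.0386 — 2 statements merged into one kernel-verified Lean document; each statement's English description precedes it below -/
import Mathlib

section
/- Fix integers $M \ge 1$ and $p_M \ge 1$. Write $p_M = a(M+1) + \bar{b}$ with $a = \lfloor (p_M - 1)/(M+1) \rfloor$ and set $b = \min\{M, \bar{b}\}$, $k^* = aM + b$. Then $\sum_{i=1}^{p_M} \big(i - p_M + \lfloor (i-1)/(M+1) \rfloor\big) = \sum_{i=1}^{k^*} \big(i - p_M + \lfloor (i-1)/M \rfloor\big) = \min_{0 \le k \le p_M} \sum_{i=1}^{k} \big(i - p_M + \lfloor (i-1)/M \rfloor\big)$. -/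
/-!
Cutting `[0, qD + r)` into blocks of length `D` gives `∑_{j < qD + r} ⌊j/D⌋ = D·q(q-1)/2 + q·r`
for `r ≤ D`, so both sums in the first identity have closed forms, which agree in each of the two
cases `b = b̄` and `b̄ = M + 1 = b + 1`. For the minimality, the summand `i - p + ⌊(i-1)/M⌋` is
monotone in `i`, nonpositive at `k*` and nonnegative at `k* + 1`.
-/

open Finset

lemma Monotone.sum_Icc_one_le_sum_Icc_one {α : Type*} [AddCommMonoid α] [PartialOrder α]
    [IsOrderedAddMonoid α] {f : ℕ → α} (hf : Monotone f) {m : ℕ} (hm : f m ≤ 0)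
    (hm' : 0 ≤ f (m + 1)) (k : ℕ) : ∑ i ∈ Icc 1 m, f i ≤ ∑ i ∈ Icc 1 k, f i := by
  have hIoc (n : ℕ) : Icc 1 n = Ioc 0 n := Icc_add_one_left_eq_Ioc 0 n
  simp only [hIoc]
  rcases le_total k m with hkm | hmk
  · rw [← sum_Ioc_consecutive f (Nat.zero_le k) hkm]
    exact add_le_of_nonpos_right <|
      sum_nonpos fun i hi => (hf (mem_Ioc.mp hi).2).trans hm
  · rw [← sum_Ioc_consecutive f (Nat.zero_le m) hmk]
    exact le_add_of_nonneg_right <|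
      sum_nonneg fun i hi => hm'.trans (hf (mem_Ioc.mp hi).1)

lemma Nat.sum_range_mul_add_div (D q r : ℕ) (hr : r ≤ D) :
    ∑ j ∈ range (q * D + r), j / D = D * ∑ i ∈ range q, i + q * r := by
  rcases Nat.eq_zero_or_pos D with rfl | hD
  · simp [Nat.le_zero.mp hr]
  have hblock (q r : ℕ) (hr : r ≤ D) : ∑ j ∈ range r, (q * D + j) / D = q * r := by
    rw [sum_congr rfl fun j hj => ?_, sum_const, card_range, smul_eq_mul, mul_comm]
    rw [add_comm, Nat.add_mul_div_right _ _ hD,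
      Nat.div_eq_of_lt ((mem_range.mp hj).trans_le hr), zero_add]
  induction q generalizing r with
  | zero => simpa using hblock 0 r hr
  | succ q ih =>
    rw [sum_range_add, hblock _ _ hr, add_one_mul q D, ih D le_rfl, sum_range_succ]
    ring

def floorSum (D p n : ℕ) : ℤ :=
  ∑ i ∈ Icc 1 n, ((i : ℤ) - (p : ℤ) + (((i - 1) / D : ℕ) : ℤ))

lemma two_mul_floorSum (D p n : ℕ) :
    2 * floorSum D p n = n * (n + 1) - 2 * n * p + 2 * ((∑ j ∈ range n, j / D : ℕ) : ℤ) := by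
  induction n with
  | zero => simp [floorSum]
  | succ n ih =>
    rw [floorSum, sum_Icc_succ_top (by omega), sum_range_succ, Nat.add_sub_cancel, mul_add,
      ← floorSum, ih]
    push_cast
    ring

lemma two_mul_floorSum_mul_add (D p q r : ℕ) (hr : r ≤ D) :
    2 * floorSum D p (q * D + r) = ((q * D + r) * (q * D + r + 1) - 2 * (q * D + r) * p
      + D * q * (q - 1) + 2 * q * r : ℤ) := by
  have hgauss : (∑ i ∈ range q, (i : ℤ)) * 2 = q * (q - 1) := by
    rcases Nat.eq_zero_or_pos q with rfl | hq
    · simp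
    · have h := congrArg (Nat.cast : ℕ → ℤ) (sum_range_id_mul_two q)
      push_cast [Nat.cast_pred hq] at h
      exact h
  rw [two_mul_floorSum, Nat.sum_range_mul_add_div D q r hr]
  push_cast
  linear_combination (D : ℤ) * hgauss

section

variable {M a bbar b : ℕ}

lemma floorSum_succ_eq (hbbar : bbar ≤ M + 1) (hb : b = min M bbar) :
    floorSum (M + 1) (a * (M + 1) + bbar) (a * (M + 1) + bbar)
      = floorSum M (a * (M + 1) + bbar) (a * M + b) := by
  refine mul_left_cancel₀ (two_ne_zero' ℤ) ?_
  rw [two_mul_floorSum_mul_add _ _ _ _ hbbar,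
    two_mul_floorSum_mul_add _ _ _ _ (hb ▸ min_le_left M bbar)]
  obtain ⟨rfl⟩ | ⟨rfl, rfl⟩ : b = bbar ∨ b = M ∧ bbar = M + 1 := by omega
  all_goals push_cast; ring

lemma floorSum_le (hM : 0 < M) (hbbar : bbar ≤ M + 1) (hb : b = min M bbar) (k : ℕ) :
    floorSum M (a * (M + 1) + bbar) (a * M + b) ≤ floorSum M (a * (M + 1) + bbar) k := by
  have hp : a * (M + 1) = a * M + a := mul_add_one a M
  refine Monotone.sum_Icc_one_le_sum_Icc_one
    (f := fun i => (i : ℤ) - (a * (M + 1) + bbar : ℕ) + ((i - 1) / M : ℕ)) ?_ ?_ ?_ k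
  · intro i j hij
    have := Nat.div_le_div_right (c := M) (Nat.sub_le_sub_right hij 1)
    dsimp only
    omega
  · have : (a * M + b - 1) / M < a + 1 := (Nat.div_lt_iff_lt_mul hM).2 (by rw [add_mul]; omega)
    omega
  · have : a ≤ (a * M + b) / M := (Nat.le_div_iff_mul_le hM).2 (Nat.le_add_right _ _)
    rw [Nat.add_sub_cancel]
    omega

end

theorem floor_sum_identity_general (M p : ℕ) (hM : 1 ≤ M)
    (a : ℕ) (ha : a = (p - 1) / (M + 1))
    (bbar : ℕ) (hbbar : p = a * (M + 1) + bbar)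
    (b : ℕ) (hb : b = min M bbar)
    (kstar : ℕ) (hkstar : kstar = a * M + b) :
    (∑ i ∈ Finset.Icc 1 p, ((i : ℤ) - (p : ℤ) + (((i - 1) / (M + 1) : ℕ) : ℤ)))
        = (∑ i ∈ Finset.Icc 1 kstar, ((i : ℤ) - (p : ℤ) + (((i - 1) / M : ℕ) : ℤ)))
    ∧ (∑ i ∈ Finset.Icc 1 kstar, ((i : ℤ) - (p : ℤ) + (((i - 1) / M : ℕ) : ℤ)))
        = (Finset.Icc 0 p).inf' (Finset.nonempty_Icc.mpr (Nat.zero_le p))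
            (fun k => ∑ i ∈ Finset.Icc 1 k,
              ((i : ℤ) - (p : ℤ) + (((i - 1) / M : ℕ) : ℤ))) := by
  have hbbar_le : bbar ≤ M + 1 := by
    have := Nat.lt_div_mul_add (a := p - 1) (by omega : 0 < M + 1)
    rw [← ha] at this
    omega
  subst hbbar hkstar
  have hkp : a * M + b ≤ a * (M + 1) + bbar := by rw [mul_add_one]; omega
  exact ⟨floorSum_succ_eq hbbar_le hb, le_antisymm
    (le_inf' _ _ fun k _ => floorSum_le hM hbbar_le hb k)
    (inf'_le _ (mem_Icc.2 ⟨Nat.zero_le _, hkp⟩))⟩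

/-- Floor-sum identity (Eq. (67)): with `a = ⌊(p-1)/(M+1)⌋`,
`p = a(M+1) + b̄`, `b = min M b̄`, `k* = aM + b`, the full sum with denominator `M+1`
equals the partial sum up to `k*` with denominator `M`, which is the minimal partial
sum over `0 ≤ k ≤ p`. -/
theorem floor_sum_identity (M p : ℕ) (hM : 1 ≤ M) (hp : 1 ≤ p)
    (a : ℕ) (ha : a = (p - 1) / (M + 1))
    (bbar : ℕ) (hbbar : p = a * (M + 1) + bbar)
    (b : ℕ) (hb : b = min M bbar)
    (kstar : ℕ) (hkstar : kstar = a * M + b) :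
    (∑ i ∈ Finset.Icc 1 p, ((i : ℤ) - (p : ℤ) + (((i - 1) / (M + 1) : ℕ) : ℤ)))
        = (∑ i ∈ Finset.Icc 1 kstar, ((i : ℤ) - (p : ℤ) + (((i - 1) / M : ℕ) : ℤ)))
    ∧ (∑ i ∈ Finset.Icc 1 kstar, ((i : ℤ) - (p : ℤ) + (((i - 1) / M : ℕ) : ℤ)))
        = (Finset.Icc 0 p).inf' (Finset.nonempty_Icc.mpr (Nat.zero_le p))
            (fun k => ∑ i ∈ Finset.Icc 1 k,
              ((i : ℤ) - (p : ℤ) + (((i - 1) / M : ℕ) : ℤ))) :=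
  floor_sum_identity_general M p hM a ha bbar hbbar b hb kstar hkstar
end

section
/- Let $\vec{n}_1$ and $\vec{n}_2$ be dimension vectors such that $\vec{n}_2$ is a sub-vector of (some permutation of) $\vec{n}_1$, with all entries positive and $\min$-entries equal where defined. Then for every $i \in \{1, \ldots, \min_j n_{2,j}\}$, $c_i(\vec{n}_1) \le c_i(\vec{n}_2)$, where $c_i(\vec{n}) = 1 - i + \min_{k=1,\ldots,N(\vec{n})} \lfloor (\sum_{l=0}^{k} \tilde{n}_l - i)/k \rfloor$ is computed from the ordered version $\tilde{n}$ of $\vec{n}$ and $N(\vec{n})+1$ is the length of $\vec{n}$. -/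
/-!
Every prefix sum of the sub-vector dominates the prefix sum of the same length of the full
vector, because an ordered vector only grows along the selected indices `l ≤ φ l`. Hence each
term of the minimum defining `c_i(n₂)` dominates the corresponding term for `c_i(n₁)`, and the
minimum for `n₁` runs over more indices.
-/

lemma monotoneOn_Iic_of_le_add_one {α : Type*} [Preorder α] {f : ℕ → α} {N : ℕ}
    (hf : ∀ l, l < N → f l ≤ f (l + 1)) : MonotoneOn f (Set.Iic N) :=
  monotoneOn_of_le_add_one Set.ordConnected_Iic fun l _ _ hl ↦ hf l hl

lemma Int.fdiv_le_fdiv_of_le {a b c : ℤ} (hc : 0 < c) (hab : a ≤ b) : a.fdiv c ≤ b.fdiv c := by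
  rw [Int.fdiv_eq_ediv_of_nonneg _ hc.le, Int.fdiv_eq_ediv_of_nonneg _ hc.le]
  exact Int.ediv_le_ediv hc hab

lemma Finset.inf'_le_inf'_of_subset_of_le {α β : Type*} [SemilatticeInf α] {s t : Finset β}
    {f g : β → α} (hst : s ⊆ t) (hs : s.Nonempty) (hfg : ∀ b ∈ s, f b ≤ g b) :
    t.inf' (hs.mono hst) f ≤ s.inf' hs g :=
  (Finset.inf'_mono f hst hs).trans (Finset.inf'_mono_fun hfg)

lemma Finset.sum_range_le_sum_range_comp_of_strictMono {M : Type*} [AddCommMonoid M]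
    [PartialOrder M] [IsOrderedAddMonoid M] {f : ℕ → M} {N k : ℕ}
    (hf : MonotoneOn f (Set.Iic N)) {φ : ℕ → ℕ} (hφ : StrictMono φ) (hφk : φ k ≤ N) :
    ∑ l ∈ Finset.range (k + 1), f l ≤ ∑ l ∈ Finset.range (k + 1), f (φ l) := by
  refine Finset.sum_le_sum fun l hl ↦ ?_
  have hφl : φ l ≤ N := (hφ.monotone (Nat.lt_succ_iff.mp (Finset.mem_range.mp hl))).trans hφk
  exact hf (hφ.le_apply.trans hφl) hφl hφ.le_apply

theorem rp_dmt_subvector_general (N₁ N₂ : ℕ) (hN₁ : 1 ≤ N₁) (hN₂ : 1 ≤ N₂)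
    (n₁ : ℕ → ℤ)
    (hmono : ∀ l, l < N₁ → n₁ l ≤ n₁ (l + 1))
    (φ : ℕ → ℕ) (hφ : StrictMono φ) (hφN : φ N₂ ≤ N₁)
    (c₁ c₂ : ℤ → ℤ)
    (hc₁ : ∀ i : ℤ, c₁ i = 1 - i +
      (Finset.Icc 1 N₁).inf' (Finset.nonempty_Icc.mpr hN₁)
        (fun k => Int.fdiv ((∑ l ∈ Finset.range (k + 1), n₁ l) - i) (k : ℤ)))
    (hc₂ : ∀ i : ℤ, c₂ i = 1 - i +
      (Finset.Icc 1 N₂).inf' (Finset.nonempty_Icc.mpr hN₂)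
        (fun k => Int.fdiv ((∑ l ∈ Finset.range (k + 1), n₁ (φ l)) - i) (k : ℤ))) :
    ∀ i : ℤ, 1 ≤ i → i ≤ n₁ (φ 0) → c₁ i ≤ c₂ i := by
  intro i _ _
  rw [hc₁ i, hc₂ i]
  have hN : N₂ ≤ N₁ := hφ.le_apply.trans hφN
  refine add_le_add_right (Finset.inf'_le_inf'_of_subset_of_le
    (Finset.Icc_subset_Icc_right hN) _ fun k hk ↦ ?_) _
  obtain ⟨hk1, hkN₂⟩ := Finset.mem_Icc.mp hk
  have hsum := Finset.sum_range_le_sum_range_comp_of_strictMono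
    (monotoneOn_Iic_of_le_add_one hmono) hφ ((hφ.monotone hkN₂).trans hφN)
  exact Int.fdiv_le_fdiv_of_le (by exact_mod_cast hk1) (Int.sub_le_sub_right hsum i)

/-- Monotonicity of the Rayleigh product channel DMT under sub-vectors:
if the ordered dimension vector `n₂ = n₁ ∘ φ` is a sub-vector of the ordered vector
`n₁` (selected by a strictly monotone index map `φ`), with positive entries and equal
minimum entries, then `c_i(n₁) ≤ c_i(n₂)` for all `1 ≤ i ≤ min n₂`. -/
theorem rp_dmt_subvector (N₁ N₂ : ℕ) (hN₁ : 1 ≤ N₁) (hN₂ : 1 ≤ N₂)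
    (n₁ : ℕ → ℤ)
    (hpos : ∀ l, l ≤ N₁ → 0 < n₁ l)
    (hmono : ∀ l, l < N₁ → n₁ l ≤ n₁ (l + 1))
    (φ : ℕ → ℕ) (hφ : StrictMono φ) (hφN : φ N₂ ≤ N₁)
    (hmin : n₁ 0 = n₁ (φ 0))
    (c₁ c₂ : ℤ → ℤ)
    (hc₁ : ∀ i : ℤ, c₁ i = 1 - i +
      (Finset.Icc 1 N₁).inf' (Finset.nonempty_Icc.mpr hN₁)
        (fun k => Int.fdiv ((∑ l ∈ Finset.range (k + 1), n₁ l) - i) (k : ℤ)))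
    (hc₂ : ∀ i : ℤ, c₂ i = 1 - i +
      (Finset.Icc 1 N₂).inf' (Finset.nonempty_Icc.mpr hN₂)
        (fun k => Int.fdiv ((∑ l ∈ Finset.range (k + 1), n₁ (φ l)) - i) (k : ℤ))) :
    ∀ i : ℤ, 1 ≤ i → i ≤ n₁ (φ 0) → c₁ i ≤ c₂ i :=
  rp_dmt_subvector_general N₁ N₂ hN₁ hN₂ n₁ hmono φ hφ hφN c₁ c₂ hc₁ hc₂
end
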